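/- arXiv:1401.7498 — 3 statements merged into one kernel-verified Lean document; each statement's English description precedes it below -/
import Mathlib

section
/- Let Σ be a finite set of positive integers, let w ∈ Σ⁺ be a primitive word of length m, and let n be a divisor of m with n < m. Then the polynomial P(w) ∈ ℤ[X] is not divisible by the polynomial (X^m − 1)/(X^n − 1) = 1 + X^n + X^{2n} + ⋯ + X^{m−n}. -/
open Polynomial

/-- Concatenation power of a word. -/
def wpow {α : Type*} (u : List α) : ℕ → List α
  | 0 => []
  | k + 1 => u ++ wpow u k

/-- The characteristic polynomial `P(w)` of a word. -/
noncomputable def wordPoly (w : List ℕ) : Polynomial ℤ :=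
  ∑ i ∈ Finset.range w.length, Polynomial.C (w.getD i 0 : ℤ) * Polynomial.X ^ i

/-- A nonempty word is primitive if it is not a proper power. -/
def Primitive (w : List ℕ) : Prop :=
  w ≠ [] ∧ ∀ (u : List ℕ) (k : ℕ), 1 < k → w ≠ wpow u k

/-!
If `Q = 1 + X^n + ⋯ + X^(m-n)` divides `P(w) = Q * R`, then `deg R < n`, since `Q` has degree
`m - n` and `P(w)` degree `< m`. So the shifted copies `X^(n i) * R` occupy disjoint blocks of
coefficients: the coefficient sequence of `P(w)`, i.e. `w` itself, is `n`-periodic, and `w` is the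
`(m / n)`-th power of its prefix of length `n`.
-/

section Words

variable {α : Type*}

lemma length_wpow (u : List α) (k : ℕ) : (wpow u k).length = k * u.length := by
  induction k with
  | zero => simp [wpow]
  | succ k ih => simp [wpow, ih, Nat.succ_mul, Nat.add_comm]

lemma getElem_wpow (u : List α) (k i : ℕ) (h : i < (wpow u k).length) :
    (wpow u k)[i] = u[i % u.length]'(Nat.mod_lt _ (by
      rw [length_wpow] at h; exact Nat.pos_of_mul_pos_left (Nat.zero_lt_of_lt h))) := by
  induction k generalizing i with
  | zero => simp [wpow] at h
  | succ k ih =>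
    simp only [wpow] at h ⊢
    by_cases hi : i < u.length
    · simp only [List.getElem_append_left hi, Nat.mod_eq_of_lt hi]
    · push Not at hi
      simp only [List.getElem_append_right hi, ih, ← Nat.mod_eq_sub_mod hi]

lemma eq_wpow_take_of_getD_mod {w : List α} {n k : ℕ} (a : α) (hlen : w.length = n * k)
    (hper : ∀ i < w.length, w.getD i a = w.getD (i % n) a) : w = wpow (w.take n) k := by
  apply List.ext_getElem
  · rcases Nat.eq_zero_or_pos k with rfl | hk
    · simp [List.length_eq_zero_iff.mp hlen, wpow]
    · rw [length_wpow, List.length_take, Nat.min_eq_left (hlen ▸ Nat.le_mul_of_pos_right n hk),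
        hlen, Nat.mul_comm]
  · intro i hi _
    obtain ⟨hn, hk⟩ := CanonicallyOrderedAdd.mul_pos.mp (hlen ▸ Nat.zero_lt_of_lt hi)
    have hnlen : n ≤ w.length := hlen ▸ Nat.le_mul_of_pos_right n hk
    have hin : i % n < w.length := (Nat.mod_lt i hn).trans_le hnlen
    have hwi := hper i hi
    rw [List.getD_eq_getElem _ _ hi, List.getD_eq_getElem _ _ hin] at hwi
    rw [getElem_wpow, List.getElem_take, hwi]
    simp only [List.length_take, Nat.min_eq_left hnlen]

end Words

section Polynomials

variable {R : Type*} [Semiring R]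

lemma coeff_sum_X_pow_mul_mul {n : ℕ} {p : R[X]} (hp : p.natDegree < n) (k d : ℕ) :
    ((∑ i ∈ Finset.range k, (X : R[X]) ^ (n * i)) * p).coeff d =
      if d < n * k then p.coeff (d % n) else 0 := by
  induction k with
  | zero => simp
  | succ k ih =>
    rw [Finset.sum_range_succ, add_mul, coeff_add, ih, coeff_X_pow_mul']
    by_cases hd : d < n * k
    · rw [if_pos hd, if_neg (by omega), if_pos (by nlinarith), add_zero]
    · rw [if_neg hd, zero_add, if_pos (by omega)]
      by_cases hd' : d < n * (k + 1)
      · rw [if_pos hd']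
        congr 1
        rw [← Nat.sub_mul_mod (k := k) (by omega),
          Nat.mod_eq_of_lt (by rw [Nat.mul_succ] at hd'; omega)]
      · rw [if_neg hd']
        exact coeff_eq_zero_of_natDegree_lt (by rw [Nat.mul_succ] at hd'; omega)

lemma coeff_sum_X_pow_mul_top {n k : ℕ} [Nontrivial R] (hn : 0 < n) (hk : 0 < k) :
    (∑ i ∈ Finset.range k, (X : R[X]) ^ (n * i)).coeff (n * (k - 1)) = 1 := by
  have h := coeff_sum_X_pow_mul_mul (p := (1 : R[X])) (by simpa using hn) k (n * (k - 1))
  rw [mul_one] at h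
  rw [h, if_pos (Nat.mul_lt_mul_of_pos_left (by omega) hn), Nat.mul_mod_right, coeff_one_zero]

lemma natDegree_lt_of_natDegree_mul_lt [NoZeroDivisors R] {p q : R[X]} {a b : ℕ}
    (hpa : p.coeff a ≠ 0) (hb : 0 < b) (hpq : (p * q).natDegree < a + b) :
    q.natDegree < b := by
  rcases eq_or_ne q 0 with rfl | hq
  · simpa using hb
  have hp : p ≠ 0 := fun h => hpa (by simp [h])
  have := le_natDegree_of_ne_zero hpa
  rw [natDegree_mul hp hq] at hpq
  omega

end Polynomials

lemma wordPoly_coeff (w : List ℕ) (d : ℕ) : (wordPoly w).coeff d = (w.getD d 0 : ℤ) := by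
  simp only [wordPoly, finsetSum_coeff, coeff_C_mul, coeff_X_pow, mul_ite, mul_one, mul_zero,
    Finset.sum_ite_eq, Finset.mem_range]
  split_ifs with hd
  · rfl
  · rw [List.getD_eq_default _ _ (Nat.le_of_not_lt hd), Nat.cast_zero]

lemma natDegree_wordPoly_lt {w : List ℕ} (hw : w ≠ []) : (wordPoly w).natDegree < w.length := by
  have hpos := List.length_pos_iff.mpr hw
  suffices (wordPoly w).natDegree ≤ w.length - 1 by omega
  refine natDegree_le_iff_coeff_eq_zero.mpr fun d hd => ?_
  rw [wordPoly_coeff, List.getD_eq_default _ _ (by omega), Nat.cast_zero]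

theorem primitive_wordPoly_not_dvd_general
    (w : List ℕ) (hprim : Primitive w)
    (m n : ℕ) (hm : w.length = m) (hdvd : n ∣ m) (hlt : n < m) :
    ¬ (∑ i ∈ Finset.range (m / n), (Polynomial.X : Polynomial ℤ) ^ (n * i)) ∣ wordPoly w := by
  rintro ⟨R, hR⟩
  obtain ⟨k, rfl⟩ := hdvd
  have hn : 0 < n := Nat.pos_of_ne_zero fun h => by simp [h] at hlt
  have hk : 1 < k := one_lt_of_lt_mul_right hlt
  rw [Nat.mul_div_cancel_left k hn] at hR
  have hRdeg : R.natDegree < n := by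
    refine natDegree_lt_of_natDegree_mul_lt
      ((coeff_sum_X_pow_mul_top (R := ℤ) hn (by omega : 0 < k)).symm ▸ one_ne_zero) hn ?_
    rw [← hR, ← Nat.mul_add_one, Nat.sub_add_cancel hk.le, ← hm]
    exact natDegree_wordPoly_lt hprim.1
  have hcoeff (d : ℕ) (hd : d < n * k) : (w.getD d 0 : ℤ) = R.coeff (d % n) := by
    rw [← wordPoly_coeff, hR, coeff_sum_X_pow_mul_mul hRdeg, if_pos hd]
  have hper (i : ℕ) (hi : i < w.length) : w.getD i 0 = w.getD (i % n) 0 := by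
    have hi' : i % n < n * k := (Nat.mod_lt i hn).trans hlt
    exact_mod_cast (hcoeff i (hm ▸ hi)).trans (Nat.mod_mod i n ▸ hcoeff (i % n) hi').symm
  exact hprim.2 _ k hk (eq_wpow_take_of_getD_mod 0 hm hper)

/-- If `w` is a primitive word of length `m` over a finite alphabet of positive integers
and `n < m` is a divisor of `m`, then `P(w)` is not divisible by
`(X^m − 1)/(X^n − 1) = 1 + X^n + ⋯ + X^(m−n)`. -/
theorem primitive_wordPoly_not_dvd
    (S : Finset ℕ) (hS : ∀ a ∈ S, 0 < a)
    (w : List ℕ) (hw : ∀ a ∈ w, a ∈ S) (hprim : Primitive w)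
    (m n : ℕ) (hm : w.length = m) (hdvd : n ∣ m) (hlt : n < m) :
    ¬ (∑ i ∈ Finset.range (m / n), (Polynomial.X : Polynomial ℤ) ^ (n * i)) ∣ wordPoly w :=
  primitive_wordPoly_not_dvd_general w hprim m n hm hdvd hlt
end

section
/- (Fine and Wilf) Let u and v be nonempty words over a finite set Σ of positive integers. If for some i, j ≥ 0 the words u^i and v^j have a common prefix of length at least |u| + |v| − gcd(|u|, |v|), then ρ(u) = ρ(v). -/
open Polynomial

/-- `t` is the primitive root of `w`. -/
def IsPrimRoot (t w : List ℕ) : Prop :=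
  Primitive t ∧ ∃ k : ℕ, 1 ≤ k ∧ w = wpow t k

lemma wpow_length {α : Type*} (u : List α) (m : ℕ) : (wpow u m).length = m * u.length := by
  induction m with
  | zero => simp [wpow]
  | succ m ih =>
    show (u ++ wpow u m).length = _
    rw [List.length_append, ih, Nat.succ_mul]
    ring

lemma wpow_add {α : Type*} (u : List α) (a b : ℕ) :
    wpow u (a + b) = wpow u a ++ wpow u b := by
  induction a with
  | zero => simp [wpow]
  | succ a ih =>
    rw [Nat.succ_add]
    show u ++ wpow u (a + b) = (u ++ wpow u a) ++ wpow u b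
    rw [ih, List.append_assoc]

lemma wpow_one {α : Type*} (u : List α) : wpow u 1 = u := by
  show u ++ wpow u 0 = u
  simp [wpow]

lemma wpow_nil {α : Type*} (k : ℕ) : wpow ([] : List α) k = [] := by
  induction k with
  | zero => rfl
  | succ k ih => show [] ++ wpow ([] : List α) k = []; simpa using ih

lemma wpow_wpow {α : Type*} (u : List α) (m k : ℕ) :
    wpow (wpow u m) k = wpow u (k * m) := by
  induction k with
  | zero => simp [wpow]
  | succ k ih =>
    show wpow u m ++ wpow (wpow u m) k = _
    rw [ih, ← wpow_add]
    congr 1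
    ring

lemma prefix_getD {w z : List ℕ} (h : w <+: z) {k : ℕ} (hk : k < w.length) (d : ℕ) :
    w.getD k d = z.getD k d := by
  obtain ⟨r, rfl⟩ := h
  rw [List.getD_append _ _ _ _ hk]

lemma wpow_getD (u : List ℕ) (m k : ℕ) (hk : k < m * u.length) :
    (wpow u m).getD k 0 = u.getD (k % u.length) 0 := by
  induction m generalizing k with
  | zero => simp at hk
  | succ m ih =>
    rcases Nat.eq_zero_or_pos u.length with h0 | h0
    · rw [h0] at hk; simp at hk
    · show (u ++ wpow u m).getD k 0 = _
      rcases lt_or_ge k u.length with h1 | h1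
      · rw [List.getD_append _ _ _ _ h1, Nat.mod_eq_of_lt h1]
      · rw [List.getD_append_right _ _ _ _ h1]
        rw [Nat.succ_mul] at hk
        rw [ih (k - u.length) (by omega)]
        congr 1
        conv_rhs => rw [← Nat.sub_add_cancel h1]
        rw [Nat.add_mod_right]

lemma period_mod (f : ℕ → ℕ) (g n : ℕ) (hg : 0 < g)
    (h : ∀ k, k + g < n → f (k + g) = f k) :
    ∀ k, k < n → f k = f (k % g) := by
  intro k
  induction k using Nat.strong_induction_on with
  | _ k IH =>
    intro hk
    rcases lt_or_ge k g with h1 | h1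
    · rw [Nat.mod_eq_of_lt h1]
    · have e : k - g + g = k := by omega
      have h2 : f k = f (k - g) := by
        conv_lhs => rw [← e]
        exact h (k - g) (by omega)
      have e2 : (k - g) % g = k % g := by
        conv_rhs => rw [← e]
        rw [Nat.add_mod_right]
      rw [h2, IH (k - g) (by omega) (by omega), e2]

lemma fw_main (N : ℕ)
    (IH : ∀ p q n (f : ℕ → ℕ), p + q ≤ N → 0 < p → 0 < q →
      p + q - Nat.gcd p q ≤ n →
      (∀ k, k + p < n → f (k + p) = f k) →
      (∀ k, k + q < n → f (k + q) = f k) →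
      ∀ k, k + Nat.gcd p q < n → f (k + Nat.gcd p q) = f k)
    (p q n : ℕ) (f : ℕ → ℕ) (hN : p + q ≤ N + 1) (hp : 0 < p) (hq : 0 < q)
    (hqp : q ≤ p)
    (hn : p + q - Nat.gcd p q ≤ n)
    (hfp : ∀ k, k + p < n → f (k + p) = f k)
    (hfq : ∀ k, k + q < n → f (k + q) = f k) :
    ∀ k, k + Nat.gcd p q < n → f (k + Nat.gcd p q) = f k := by
  by_cases hdvd : q ∣ p
  · rw [Nat.gcd_eq_right hdvd]; exact hfq
  · have hqlt : q < p := lt_of_le_of_ne hqp (fun h => hdvd (h ▸ dvd_rfl))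
    set g := Nat.gcd p q with hg
    have hgq : g ∣ q := Nat.gcd_dvd_right p q
    have hgp : g ∣ p := Nat.gcd_dvd_left p q
    have hgle : g ≤ q := Nat.le_of_dvd hq hgq
    have hgpos : 0 < g := Nat.gcd_pos_of_pos_left q hp
    have hglt : g < q := lt_of_le_of_ne hgle (fun h => hdvd (h ▸ hgp))
    have hpq : g ∣ p - q := Nat.dvd_sub hgp hgq
    have hqgp : q + g ≤ p := by
      have := Nat.le_of_dvd (by omega) hpq; omega
    have hgcd' : Nat.gcd (p - q) q = g := Nat.gcd_sub_self_left hqp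
    have inner : ∀ k, k + g < n - q → f (k + g) = f k := by
      have h1 : ∀ k, k + (p - q) < n - q → f (k + (p - q)) = f k := by
        intro k hk
        have hkp : k + p < n := by omega
        have e1 : (k + (p - q)) + q = k + p := by omega
        have h2 := hfq (k + (p - q)) (by omega)
        rw [e1] at h2
        rw [← h2]
        exact hfp k hkp
      have h2 : ∀ k, k + q < n - q → f (k + q) = f k := fun k hk => hfq k (by omega)
      have h3 := IH (p - q) q (n - q) f (by omega) (by omega) hq
        (by rw [hgcd']; omega) h1 h2
      rw [hgcd'] at h3
      exact h3
    have P : ∀ k, k < n → f k = f (k % g) := by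
      intro k
      induction k using Nat.strong_induction_on with
      | _ k IH2 =>
        intro hk
        rcases lt_or_ge k g with h1 | h1
        · rw [Nat.mod_eq_of_lt h1]
        · rcases lt_or_ge k (n - q) with h2 | h2
          · have e : k - g + g = k := by omega
            have h3 : f k = f (k - g) := by
              conv_lhs => rw [← e]
              exact inner (k - g) (by omega)
            have e2 : (k - g) % g = k % g := by
              conv_rhs => rw [← e]
              rw [Nat.add_mod_right]
            rw [h3, IH2 (k - g) (by omega) (by omega), e2]
          · have hkq : q ≤ k := by omega
            have e : k - q + q = k := by omega
            have h3 : f k = f (k - q) := by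
              conv_lhs => rw [← e]
              exact hfq (k - q) (by omega)
            obtain ⟨c, hc⟩ := hgq
            have e2 : (k - q) % g = k % g := by
              conv_rhs => rw [← e]
              rw [hc, Nat.add_mul_mod_self_left]
            rw [h3, IH2 (k - q) (by omega) (by omega), e2]
    intro k hk
    rw [P (k + g) hk, Nat.add_mod_right, P k (by omega)]

lemma fw_aux : ∀ N p q n (f : ℕ → ℕ), p + q ≤ N → 0 < p → 0 < q →
    p + q - Nat.gcd p q ≤ n →
    (∀ k, k + p < n → f (k + p) = f k) →
    (∀ k, k + q < n → f (k + q) = f k) →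
    ∀ k, k + Nat.gcd p q < n → f (k + Nat.gcd p q) = f k := by
  intro N
  induction N with
  | zero => intro p q n f h hp; have h0 : p + q ≤ 0 := h; exact absurd h0 (by omega)
  | succ N IH =>
    intro p q n f hN hp hq hn hfp hfq
    rcases le_total q p with h | h
    · exact fw_main N IH p q n f hN hp hq h hn hfp hfq
    · have h2 := fw_main N IH q p n f (by omega) hq hp h
        (by rw [Nat.gcd_comm q p]; omega) hfq hfp
      rw [Nat.gcd_comm q p] at h2
      exact h2

lemma exists_primroot : ∀ (L : ℕ) (w : List ℕ), w.length ≤ L → w ≠ [] →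
    ∃ t, IsPrimRoot t w := by
  intro L
  induction L using Nat.strong_induction_on with
  | _ L IH =>
    intro w hL hw
    by_cases h : Primitive w
    · exact ⟨w, h, 1, le_refl 1, (wpow_one w).symm⟩
    · have h' : ∃ u k, 1 < k ∧ w = wpow u k := by
        by_contra hc
        push_neg at hc
        exact h ⟨hw, fun u k hk => hc u k hk⟩
      obtain ⟨u, k, hk, huk⟩ := h'
      have hu0 : u ≠ [] := by
        rintro rfl
        rw [wpow_nil] at huk
        exact hw huk
      have hul : 0 < u.length := List.length_pos_iff.mpr hu0
      have hwlen : w.length = k * u.length := by rw [huk, wpow_length]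
      have hlt : u.length < w.length := by
        rw [hwlen]
        calc u.length = 1 * u.length := (one_mul _).symm
          _ < k * u.length := (Nat.mul_lt_mul_right hul).mpr hk
      have hw1 : 1 ≤ w.length := List.length_pos_iff.mpr hw
      obtain ⟨t, ht, m, hm, hum⟩ := IH (w.length - 1) (by omega) u (by omega) hu0
      refine ⟨t, ht, k * m, ?_, ?_⟩
      · exact Nat.mul_pos (by omega) hm
      · rw [huk, hum, wpow_wpow]

/-- Fine and Wilf: if `u^i` and `v^j` have a common prefix of length at least
`|u| + |v| − gcd(|u|, |v|)`, then `u` and `v` have the same primitive root. -/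
theorem fine_and_wilf
    (S : Finset ℕ) (hS : ∀ a ∈ S, 0 < a)
    (u v : List ℕ) (hu : ∀ a ∈ u, a ∈ S) (hv : ∀ a ∈ v, a ∈ S)
    (hu0 : u ≠ []) (hv0 : v ≠ [])
    (i j : ℕ) (w : List ℕ)
    (hwu : w <+: wpow u i) (hwv : w <+: wpow v j)
    (hlen : u.length + v.length - Nat.gcd u.length v.length ≤ w.length) :
    ∃ t : List ℕ, IsPrimRoot t u ∧ IsPrimRoot t v := by
  have hp : 0 < u.length := List.length_pos_iff.mpr hu0
  have hq : 0 < v.length := List.length_pos_iff.mpr hv0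
  have hgp : Nat.gcd u.length v.length ∣ u.length := Nat.gcd_dvd_left _ _
  have hgq : Nat.gcd u.length v.length ∣ v.length := Nat.gcd_dvd_right _ _
  have hg : 0 < Nat.gcd u.length v.length := Nat.gcd_pos_of_pos_left _ hp
  have hgle : Nat.gcd u.length v.length ≤ u.length := Nat.le_of_dvd hp hgp
  have hgleq : Nat.gcd u.length v.length ≤ v.length := Nat.le_of_dvd hq hgq
  have hni : w.length ≤ i * u.length := by
    have := hwu.length_le; rwa [wpow_length] at this
  have hnj : w.length ≤ j * v.length := by
    have := hwv.length_le; rwa [wpow_length] at this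
  have hWu : ∀ k, k < w.length → w.getD k 0 = u.getD (k % u.length) 0 := by
    intro k hk
    rw [prefix_getD hwu hk 0, wpow_getD u i k (by omega)]
  have hWv : ∀ k, k < w.length → w.getD k 0 = v.getD (k % v.length) 0 := by
    intro k hk
    rw [prefix_getD hwv hk 0, wpow_getD v j k (by omega)]
  set f : ℕ → ℕ := fun k => w.getD k 0 with hf
  have hfp : ∀ k, k + u.length < w.length → f (k + u.length) = f k := by
    intro k hk
    show w.getD (k + u.length) 0 = w.getD k 0
    rw [hWu _ hk, hWu k (by omega), Nat.add_mod_right]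
  have hfq : ∀ k, k + v.length < w.length → f (k + v.length) = f k := by
    intro k hk
    show w.getD (k + v.length) 0 = w.getD k 0
    rw [hWv _ hk, hWv k (by omega), Nat.add_mod_right]
  have hper := fw_aux (u.length + v.length) u.length v.length w.length f le_rfl
    hp hq hlen hfp hfq
  have hmod := period_mod f (Nat.gcd u.length v.length) w.length hg hper
  have hgn : Nat.gcd u.length v.length ≤ w.length := by omega
  have htlen : (w.take (Nat.gcd u.length v.length)).length = Nat.gcd u.length v.length := by
    rw [List.length_take]; omega
  have htget : ∀ k, k < Nat.gcd u.length v.length →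
      (w.take (Nat.gcd u.length v.length)).getD k 0 = f k := by
    intro k hk
    exact prefix_getD (List.take_prefix _ w) (by rw [htlen]; exact hk) 0
  have key : ∀ (x : List ℕ) (a : ℕ), x.length = a * Nat.gcd u.length v.length →
      (∀ k, k < x.length → x.getD k 0 = f k) →
      x.length ≤ w.length → x = wpow (w.take (Nat.gcd u.length v.length)) a := by
    intro x a hxl hxf hxn
    apply List.ext_getElem (by rw [hxl, wpow_length, htlen])
    intro k h1 h2
    rw [← List.getD_eq_getElem x 0 h1, ← List.getD_eq_getElem _ 0 h2]
    rw [hxf k h1, wpow_getD _ a k (by rw [htlen]; omega), htlen,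
      htget _ (Nat.mod_lt _ hg)]
    exact hmod k (by omega)
  have hpu : u = wpow (w.take (Nat.gcd u.length v.length))
      (u.length / Nat.gcd u.length v.length) := by
    apply key
    · rw [Nat.div_mul_cancel hgp]
    · intro k hk
      show u.getD k 0 = w.getD k 0
      rw [hWu k (by omega), Nat.mod_eq_of_lt hk]
    · omega
  have hpv : v = wpow (w.take (Nat.gcd u.length v.length))
      (v.length / Nat.gcd u.length v.length) := by
    apply key
    · rw [Nat.div_mul_cancel hgq]
    · intro k hk
      show v.getD k 0 = w.getD k 0
      rw [hWv k (by omega), Nat.mod_eq_of_lt hk]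
    · omega
  have ht0 : w.take (Nat.gcd u.length v.length) ≠ [] :=
    List.length_pos_iff.mp (by rw [htlen]; exact hg)
  obtain ⟨s, hs, m, hm, hsm⟩ := exists_primroot
    (w.take (Nat.gcd u.length v.length)).length (w.take (Nat.gcd u.length v.length)) le_rfl ht0
  have ha : 0 < u.length / Nat.gcd u.length v.length := Nat.div_pos hgle hg
  have hb : 0 < v.length / Nat.gcd u.length v.length := Nat.div_pos hgleq hg
  refine ⟨s, ⟨hs, (u.length / Nat.gcd u.length v.length) * m, Nat.mul_pos ha hm, ?_⟩,
    ⟨hs, (v.length / Nat.gcd u.length v.length) * m, Nat.mul_pos hb hm, ?_⟩⟩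
  · conv_lhs => rw [hpu, hsm, wpow_wpow]
  · conv_lhs => rw [hpv, hsm, wpow_wpow]
end

section
/- Let E be a word equation on n unknowns and let h be a solution of E of rank r and length type L. Then there exist a monoid morphism f: Ξ* → Ξ*, a monoid morphism θ: Ξ* → Σ*, and polynomials p_{ij} ∈ ℤ[X] (1 ≤ i, j ≤ n) such that: (1) h = θ ∘ f; (2) f is a solution of E (i.e., f(u) = f(v) for E: u = v); (3) θ(x) ≠ ε for every unknown x; (4) P((g ∘ f)(x_i)) = Σ_{j=1}^{n} p_{ij} · P(g(x_j)) for every i whenever g: Ξ* → Σ* is a morphism of the same length type as θ; (5) at least r of the n column vectors (p_{1j}, …, p_{nj}), j = 1, …, n, are linearly independent over the field ℚ(X) of rational functions. -/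
/-!
The images `h xᵢ` generate a free hull: the smallest submonoid `H` of `ℕ*` that is stable
(`u, v, uw, wv ∈ H` imply `w ∈ H`). Stability makes `H` free on its base `B`, and forces every
base word to be the first factor of the factorization of some `h xᵢ`; choosing such an index for
each base word embeds `B` into the unknowns. Then `θ` sends that index back to its base word and
`f xᵢ` is the factorization of `h xᵢ` over `B`, written in indices: `f` solves `E` by uniqueness
of factorizations, and `r ≤ |B|` because `B` generates every image.

The polynomial `p i j` sums `X ^ (position)` over the occurrences of `xⱼ` in `f xᵢ`. A linear
relation between the columns of the base indices gives a functional `Φ` on `H` with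
`Φ (ab) = Φ a + X ^ |a| * Φ b` that vanishes on the images. Its zero set is again stable, hence
contains `B`, and `Φ` evaluated at a base word is the coefficient of its index.
-/

open Polynomial

/-- Application of a morphism (given by the images of the unknowns) to a word. -/
def mApply {n : ℕ} {β : Type*} (h : Fin n → List β) (w : List (Fin n)) : List β :=
  (w.map h).flatten

/-- The morphism maps every unknown to a word over the alphabet `A`. -/
def IntoAlph {n : ℕ} (A : Finset ℕ) (h : Fin n → List ℕ) : Prop :=
  ∀ i, ∀ a ∈ h i, a ∈ A

/-- `w` is a product of words from `A`. -/
def InStar (A : Finset (List ℕ)) (w : List ℕ) : Prop :=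
  ∃ l : List (List ℕ), (∀ u ∈ l, u ∈ A) ∧ l.flatten = w

/-- The combinatorial rank of a morphism: the smallest `r` such that there is a set of
`r` words whose products contain all images of the unknowns. -/
noncomputable def mRank {n : ℕ} (h : Fin n → List ℕ) : ℕ :=
  sInf {r | ∃ A : Finset (List ℕ), A.card = r ∧ ∀ i, InStar A (h i)}

/-- The length type of a morphism, as a rational vector. -/
def lenQ {n : ℕ} (h : Fin n → List ℕ) : Fin n → ℚ :=
  fun i => ((h i).length : ℚ)

/-- `|w|_L`: the length of the image of `w` under any morphism of length type `L`. -/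
def lenL {n : ℕ} (L : Fin n → ℕ) (w : List (Fin n)) : ℕ :=
  (w.map L).sum

/-- The polynomial `Q_{E,x,L}` for the word equation `u = v`, the unknown `x` and the
length type `L`. -/
noncomputable def eqPoly {n : ℕ} (u v : List (Fin n)) (x : Fin n) (L : Fin n → ℕ) :
    Polynomial ℤ :=
  (∑ i ∈ Finset.range u.length,
      if u.getD i x = x then (Polynomial.X : Polynomial ℤ) ^ lenL L (u.take i) else 0)
    - ∑ i ∈ Finset.range v.length,
      if v.getD i x = x then (Polynomial.X : Polynomial ℤ) ^ lenL L (v.take i) else 0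

/-- Embedding of `ℤ[X]` into the field `ℚ(X)` of rational functions. -/
noncomputable def toRF (p : Polynomial ℤ) : RatFunc ℚ :=
  algebraMap (Polynomial ℚ) (RatFunc ℚ) (p.map (Int.castRingHom ℚ))

section WordPolynomials

variable {n : ℕ}

lemma mApply_cons {β : Type*} (g : Fin n → List β) (a : Fin n) (w : List (Fin n)) :
    mApply g (a :: w) = g a ++ mApply g w := by
  simp [mApply]

lemma length_mApply {β : Type*} (g : Fin n → List β) (w : List (Fin n)) :
    (mApply g w).length = lenL (fun j => (g j).length) w := by
  simp [mApply, lenL, List.length_flatten, Function.comp_def]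

lemma wordPoly_cons (a : ℕ) (w : List ℕ) :
    wordPoly (a :: w) = C (a : ℤ) + X * wordPoly w := by
  simp only [wordPoly, List.length_cons, Finset.sum_range_succ', List.getD_cons_succ,
    List.getD_cons_zero, pow_zero, mul_one, Finset.mul_sum, pow_succ]
  rw [add_comm]
  congr 1
  exact Finset.sum_congr rfl fun i _ => by ring

lemma wordPoly_append (w₁ w₂ : List ℕ) :
    wordPoly (w₁ ++ w₂) = wordPoly w₁ + X ^ w₁.length * wordPoly w₂ := by
  induction w₁ with
  | nil => simp [wordPoly]
  | cons a w ih =>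
    rw [List.cons_append, wordPoly_cons, ih, wordPoly_cons, List.length_cons, pow_succ]
    ring

/-- `occPoly L w j = ∑ X ^ |w₀ ⋯ w_{k-1}|_L` over the positions `k` with `w_k = j`. -/
noncomputable def occPoly (L : Fin n → ℕ) : List (Fin n) → Fin n → ℤ[X]
  | [], _ => 0
  | a :: w, j => (if a = j then 1 else 0) + X ^ L a * occPoly L w j

lemma occPoly_append (L : Fin n → ℕ) (w₁ w₂ : List (Fin n)) (j : Fin n) :
    occPoly L (w₁ ++ w₂) j = occPoly L w₁ j + X ^ lenL L w₁ * occPoly L w₂ j := by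
  induction w₁ with
  | nil => simp [occPoly, lenL]
  | cons a w ih =>
    simp only [List.cons_append, occPoly, ih, lenL, List.map_cons, List.sum_cons, pow_add]
    ring

lemma wordPoly_mApply (L : Fin n → ℕ) (g : Fin n → List ℕ) (hg : ∀ j, (g j).length = L j)
    (w : List (Fin n)) :
    wordPoly (mApply g w) = ∑ j, occPoly L w j * wordPoly (g j) := by
  induction w with
  | nil => simp [mApply, wordPoly, occPoly]
  | cons a w ih =>
    simp only [mApply_cons, wordPoly_append, ih, hg a, occPoly, add_mul, ite_mul, one_mul,
      zero_mul, Finset.sum_add_distrib, Finset.sum_ite_eq, Finset.mem_univ, if_true,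
      Finset.mul_sum, mul_assoc]

lemma mRank_le_card (h : Fin n → List ℕ) {A : Finset (List ℕ)} (hA : ∀ i, InStar A (h i)) :
    mRank h ≤ A.card :=
  Nat.sInf_le ⟨A, rfl, hA⟩

end WordPolynomials

namespace FreeHull

section Hull

variable {α ι : Type*} (h : ι → List α)

/-- Stability in the sense of Schützenberger: stable submonoids of a free monoid are free. -/
def IsStable (M : Set (List α)) : Prop :=
  [] ∈ M ∧ (∀ u ∈ M, ∀ v ∈ M, u ++ v ∈ M) ∧
    ∀ u v w, u ∈ M → v ∈ M → u ++ w ∈ M → w ++ v ∈ M → w ∈ M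

def hull : Set (List α) :=
  {w | ∀ M, IsStable M → (∀ i, h i ∈ M) → w ∈ M}

def base : Set (List α) :=
  {w | w ∈ hull h ∧ w ≠ [] ∧ ∀ a ∈ hull h, ∀ b ∈ hull h, a ≠ [] → b ≠ [] → a ++ b ≠ w}

def IsFactorization (l : List (List α)) (w : List α) : Prop :=
  (∀ d ∈ l, d ∈ base h) ∧ l.flatten = w

variable {h}

lemma hull_isStable : IsStable (hull h) :=
  ⟨fun _ hM _ => hM.1, fun _ hu _ hv M hM hi => hM.2.1 _ (hu M hM hi) _ (hv M hM hi),
    fun _ _ _ hu hv huw hwv M hM hi =>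
      hM.2.2 _ _ _ (hu M hM hi) (hv M hM hi) (huw M hM hi) (hwv M hM hi)⟩

lemma mem_hull (i : ι) : h i ∈ hull h := fun _ _ hi => hi i

lemma hull_subset {M : Set (List α)} (hM : IsStable M) (hi : ∀ i, h i ∈ M) : hull h ⊆ M :=
  fun _ hw => hw M hM hi

lemma ne_nil_of_mem_base {d : List α} (hd : d ∈ base h) : d ≠ [] := hd.2.1

lemma flatten_mem_hull {l : List (List α)} (hl : ∀ d ∈ l, d ∈ base h) : l.flatten ∈ hull h := by
  induction l with
  | nil => exact hull_isStable.1
  | cons d t ih =>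
    exact hull_isStable.2.1 _ (hl d List.mem_cons_self).1 _
      (ih fun e he => hl e (List.mem_cons_of_mem d he))

lemma exists_isFactorization {w : List α} (hw : w ∈ hull h) : ∃ l, IsFactorization h l w := by
  by_cases hnil : w = []
  · exact ⟨[], by simp, by simp [hnil]⟩
  by_cases hbase : w ∈ base h
  · exact ⟨[w], by simp [hbase], by simp⟩
  obtain ⟨a, ha, b, hb, hanil, hbnil, hab⟩ :
      ∃ a ∈ hull h, ∃ b ∈ hull h, a ≠ [] ∧ b ≠ [] ∧ a ++ b = w := by
    simpa [base, hw, hnil] using hbase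
  have hlen : a.length + b.length = w.length := by rw [← hab, List.length_append]
  obtain ⟨la, hla, rfl⟩ := exists_isFactorization ha
  obtain ⟨lb, hlb, rfl⟩ := exists_isFactorization hb
  exact ⟨la ++ lb, fun d hd => (List.mem_append.mp hd).elim (hla d) (hlb d), by simp [← hab]⟩
termination_by w.length
decreasing_by
  · have := List.length_pos_iff.mpr hbnil; omega
  · have := List.length_pos_iff.mpr hanil; omega

lemma eq_nil_of_append_mem_base {d a y : List α} (hd : d ∈ base h) (hda : d ++ a ∈ base h)
    (hy : y ∈ hull h) (hay : a ++ y ∈ hull h) : a = [] := by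
  by_contra ha
  exact hda.2.2 d hd.1 a (hull_isStable.2.2 d y a hd.1 hy hda.1 hay) (ne_nil_of_mem_base hd) ha rfl

lemma eq_of_append_eq_append {d₁ d₂ x₁ x₂ : List α} (hd₁ : d₁ ∈ base h) (hd₂ : d₂ ∈ base h)
    (hx₁ : x₁ ∈ hull h) (hx₂ : x₂ ∈ hull h) (heq : d₁ ++ x₁ = d₂ ++ x₂) : d₁ = d₂ := by
  rcases List.append_eq_append_iff.mp heq with ⟨a, rfl, rfl⟩ | ⟨a, rfl, rfl⟩
  · simp [eq_nil_of_append_mem_base hd₁ hd₂ hx₂ hx₁]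
  · simp [eq_nil_of_append_mem_base hd₂ hd₁ hx₁ hx₂]

lemma isFactorization_unique :
    ∀ {l₁ l₂ : List (List α)} {w : List α},
      IsFactorization h l₁ w → IsFactorization h l₂ w → l₁ = l₂
  | [], [], _, _, _ => rfl
  | [], d :: _, _, ⟨_, rfl⟩, ⟨h₂, hf⟩ =>
    absurd (List.flatten_eq_nil_iff.mp hf d List.mem_cons_self)
      (ne_nil_of_mem_base (h₂ d List.mem_cons_self))
  | d :: _, [], _, ⟨h₁, hf⟩, ⟨_, rfl⟩ =>
    absurd (List.flatten_eq_nil_iff.mp hf d List.mem_cons_self)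
      (ne_nil_of_mem_base (h₁ d List.mem_cons_self))
  | d₁ :: t₁, d₂ :: t₂, _, ⟨h₁, hf₁⟩, ⟨h₂, hf₂⟩ => by
    have ht₁ : ∀ d ∈ t₁, d ∈ base h := fun d hd => h₁ d (List.mem_cons_of_mem _ hd)
    have ht₂ : ∀ d ∈ t₂, d ∈ base h := fun d hd => h₂ d (List.mem_cons_of_mem _ hd)
    have hf : d₁ ++ t₁.flatten = d₂ ++ t₂.flatten := by simp only [← List.flatten_cons, hf₁, hf₂]
    obtain rfl := eq_of_append_eq_append (h₁ d₁ List.mem_cons_self) (h₂ d₂ List.mem_cons_self)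
      (flatten_mem_hull ht₁) (flatten_mem_hull ht₂) hf
    rw [isFactorization_unique ⟨ht₁, rfl⟩ ⟨ht₂, (List.append_cancel_left hf).symm⟩]

variable (h)

/-- Unspecified off the hull. -/
noncomputable def factorization (w : List α) : List (List α) :=
  Classical.epsilon fun l => IsFactorization h l w

variable {h}

lemma isFactorization_factorization {w : List α} (hw : w ∈ hull h) :
    IsFactorization h (factorization h w) w :=
  Classical.epsilon_spec (exists_isFactorization hw)

lemma factorization_eq {l : List (List α)} {w : List α} (hl : IsFactorization h l w) :
    factorization h w = l :=
  isFactorization_unique (isFactorization_factorization (hl.2 ▸ flatten_mem_hull hl.1)) hl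

lemma factorization_nil : factorization h [] = [] :=
  factorization_eq ⟨by simp, rfl⟩

lemma factorization_of_mem_base {d : List α} (hd : d ∈ base h) : factorization h d = [d] :=
  factorization_eq ⟨by simpa using hd, by simp⟩

lemma factorization_append {a b : List α} (ha : a ∈ hull h) (hb : b ∈ hull h) :
    factorization h (a ++ b) = factorization h a ++ factorization h b := by
  obtain ⟨hla, hfa⟩ := isFactorization_factorization ha
  obtain ⟨hlb, hfb⟩ := isFactorization_factorization hb
  exact factorization_eq
    ⟨fun d hd => (List.mem_append.mp hd).elim (hla d) (hlb d), by simp [hfa, hfb]⟩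

/-- The words of the hull whose factorization does not start with `d` form a stable set. -/
lemma exists_factorization_eq_cons {d : List α} (hd : d ∈ base h) :
    ∃ i t, factorization h (h i) = d :: t := by
  by_contra! hcon
  let M : Set (List α) := {w | w ∈ hull h ∧ ∀ t, factorization h w ≠ d :: t}
  have hM : IsStable M := by
    refine ⟨⟨hull_isStable.1, by simp [factorization_nil]⟩, fun a ha b hb => ?_,
      fun a b w ha hb haw hwb => ?_⟩
    · refine ⟨hull_isStable.2.1 a ha.1 b hb.1, fun t ht => ?_⟩
      rw [factorization_append ha.1 hb.1] at ht
      rcases hfa : factorization h a with _ | ⟨e, t'⟩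
      · exact hb.2 t (by simpa [hfa] using ht)
      · rw [hfa, List.cons_append, List.cons.injEq] at ht
        exact ha.2 t' (by rw [hfa, ht.1])
    · have hw : w ∈ hull h := hull_isStable.2.2 a b w ha.1 hb.1 haw.1 hwb.1
      refine ⟨hw, fun t ht => hwb.2 (t ++ factorization h b) ?_⟩
      rw [factorization_append hw hb.1, ht, List.cons_append]
  exact (hull_subset hM (fun i => ⟨mem_hull i, hcon i⟩) hd.1).2 [] (factorization_of_mem_base hd)

lemma eq_zero_of_mem_hull {R : Type*} [Ring R] [NoZeroDivisors R] {y : R} (hy : y ≠ 0)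
    {Φ : List α → R} (hΦ : ∀ a ∈ hull h, ∀ b ∈ hull h, Φ (a ++ b) = Φ a + y ^ a.length * Φ b)
    (hgen : ∀ i, Φ (h i) = 0) {w : List α} (hw : w ∈ hull h) : Φ w = 0 := by
  have hnil : Φ [] = 0 := by
    simpa using hΦ [] hull_isStable.1 [] hull_isStable.1
  let Z : Set (List α) := {w | w ∈ hull h ∧ Φ w = 0}
  have hZ : IsStable Z := by
    refine ⟨⟨hull_isStable.1, hnil⟩, fun a ha b hb => ?_, fun a b w ha hb haw hwb => ?_⟩
    · exact ⟨hull_isStable.2.1 a ha.1 b hb.1, by simp [hΦ a ha.1 b hb.1, ha.2, hb.2]⟩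
    · have hw : w ∈ hull h := hull_isStable.2.2 a b w ha.1 hb.1 haw.1 hwb.1
      have := haw.2
      rw [hΦ a ha.1 w hw, ha.2, zero_add] at this
      exact ⟨hw, (mul_eq_zero.mp this).resolve_left (pow_ne_zero _ hy)⟩
  exact (hull_subset hZ (fun i => ⟨mem_hull i, hgen i⟩) hw).2

variable (h) [Nonempty ι]

noncomputable def baseIndex (d : List α) : ι :=
  Classical.epsilon fun i => ∃ t, factorization h (h i) = d :: t

variable {h}

lemma factorization_baseIndex {d : List α} (hd : d ∈ base h) :
    ∃ t, factorization h (h (baseIndex h d)) = d :: t :=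
  Classical.epsilon_spec (exists_factorization_eq_cons hd)

end Hull

variable {n : ℕ}

lemma factorization_mApply {α : Type*} {h : Fin n → List α} (w : List (Fin n)) :
    factorization h (mApply h w) = (w.map fun i => factorization h (h i)).flatten := by
  refine factorization_eq ⟨fun d hd => ?_, ?_⟩
  · simp only [List.mem_flatten, List.mem_map] at hd
    obtain ⟨_, ⟨i, _, rfl⟩, hd⟩ := hd
    exact (isFactorization_factorization (mem_hull i)).1 d hd
  · simp [mApply, List.flatten_flatten, Function.comp_def,
      fun i => (isFactorization_factorization (mem_hull (h := h) i)).2]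

variable (h : Fin n → List ℕ) [Nonempty (Fin n)]

noncomputable def baseCode (i : Fin n) : List (Fin n) :=
  (factorization h (h i)).map (baseIndex h)

open Classical in
noncomputable def baseIndices : Finset (Fin n) :=
  Finset.univ.filter fun j => ∃ d ∈ base h, baseIndex h d = j

noncomputable def baseWord (j : Fin n) : List ℕ :=
  if j ∈ baseIndices h then (factorization h (h j)).headI else [1]

variable {h}

lemma mem_baseIndices {j : Fin n} : j ∈ baseIndices h ↔ ∃ d ∈ base h, baseIndex h d = j := by
  simp [baseIndices]

lemma baseWord_baseIndex {d : List ℕ} (hd : d ∈ base h) : baseWord h (baseIndex h d) = d := by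
  obtain ⟨t, ht⟩ := factorization_baseIndex hd
  simp [baseWord, mem_baseIndices.mpr ⟨d, hd, rfl⟩, ht]

lemma baseWord_ne_nil (j : Fin n) : baseWord h j ≠ [] := by
  by_cases hj : j ∈ baseIndices h
  · obtain ⟨d, hd, rfl⟩ := mem_baseIndices.mp hj
    rw [baseWord_baseIndex hd]
    exact ne_nil_of_mem_base hd
  · simp [baseWord, hj]

lemma mApply_baseWord_map_baseIndex {l : List (List ℕ)} (hl : ∀ d ∈ l, d ∈ base h) :
    mApply (baseWord h) (l.map (baseIndex h)) = l.flatten := by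
  have hid : ∀ d ∈ l, (baseWord h ∘ baseIndex h) d = id d :=
    fun d hd => baseWord_baseIndex (hl d hd)
  rw [mApply, List.map_map, List.map_congr_left hid, List.map_id]

lemma mApply_baseWord_baseCode (i : Fin n) : mApply (baseWord h) (baseCode h i) = h i :=
  have hfac := isFactorization_factorization (mem_hull (h := h) i)
  (mApply_baseWord_map_baseIndex hfac.1).trans hfac.2

lemma mApply_baseCode (w : List (Fin n)) :
    mApply (baseCode h) w = (factorization h (mApply h w)).map (baseIndex h) := by
  rw [factorization_mApply, List.map_flatten, List.map_map]
  rfl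

lemma mRank_le_card_baseIndices : mRank h ≤ (baseIndices h).card := by
  refine (mRank_le_card h (A := (baseIndices h).image (baseWord h)) fun i => ?_).trans
    Finset.card_image_le
  obtain ⟨hbase, hflat⟩ := isFactorization_factorization (mem_hull (h := h) i)
  exact ⟨_, fun d hd => Finset.mem_image.mpr ⟨baseIndex h d,
    mem_baseIndices.mpr ⟨d, hbase d hd, rfl⟩, baseWord_baseIndex (hbase d hd)⟩, hflat⟩

lemma lenL_map_baseIndex {w : List ℕ} (hw : w ∈ hull h) :
    lenL (fun j => (baseWord h j).length) ((factorization h w).map (baseIndex h)) = w.length := by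
  obtain ⟨hbase, hflat⟩ := isFactorization_factorization hw
  rw [← length_mApply, mApply_baseWord_map_baseIndex hbase, hflat]

lemma linearIndependent_occPoly_baseCode :
    LinearIndependent (RatFunc ℚ) fun j : baseIndices h =>
      fun i => toRF (occPoly (fun k => (baseWord h k).length) (baseCode h i) j) := by
  set L : Fin n → ℕ := fun k => (baseWord h k).length
  let τ : ℤ[X] →+* RatFunc ℚ :=
    (algebraMap ℚ[X] (RatFunc ℚ)).comp (Polynomial.mapRingHom (Int.castRingHom ℚ))
  have hτ : ∀ p, toRF p = τ p := fun _ => rfl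
  rw [Fintype.linearIndependent_iff]
  intro c hc j
  let Φ : List ℕ → RatFunc ℚ := fun w =>
    ∑ k : baseIndices h, c k * τ (occPoly L ((factorization h w).map (baseIndex h)) k)
  have hΦ : ∀ a ∈ hull h, ∀ b ∈ hull h, Φ (a ++ b) = Φ a + τ X ^ a.length * Φ b := by
    intro a ha b hb
    have hlen : lenL L ((factorization h a).map (baseIndex h)) = a.length :=
      lenL_map_baseIndex ha
    simp only [Φ, factorization_append ha hb, List.map_append, occPoly_append, hlen, map_add,
      map_mul, map_pow, mul_add, Finset.sum_add_distrib, Finset.mul_sum]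
    congr 1
    exact Finset.sum_congr rfl fun k _ => by ring
  have hgen : ∀ i, Φ (h i) = 0 := fun i => by
    simpa [Φ, hτ, baseCode] using congrFun hc i
  have hX : τ X ≠ 0 := RatFunc.algebraMap_ne_zero (by simp)
  obtain ⟨d, hd, hdj⟩ := mem_baseIndices.mp j.2
  have := eq_zero_of_mem_hull hX hΦ hgen hd.1
  simpa [Φ, factorization_of_mem_base hd, occPoly, hdj] using this

end FreeHull

open FreeHull in
theorem solution_factorization_general {n : ℕ}
    (A : Finset ℕ)
    (u v : List (Fin n)) (h : Fin n → List ℕ)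
    (hsol : mApply h u = mApply h v)
    (r : ℕ) (hr : mRank h = r) :
    ∃ (f : Fin n → List (Fin n)) (θ : Fin n → List ℕ)
      (p : Fin n → Fin n → Polynomial ℤ),
      (∀ i, h i = mApply θ (f i)) ∧
      mApply f u = mApply f v ∧
      (∀ i, θ i ≠ []) ∧
      (∀ g : Fin n → List ℕ, IntoAlph A g → (∀ j, (g j).length = (θ j).length) →
        ∀ i, wordPoly (mApply g (f i)) = ∑ j : Fin n, p i j * wordPoly (g j)) ∧
      (∃ s : Finset (Fin n), r ≤ s.card ∧
        LinearIndependent (RatFunc ℚ) (fun j : s => fun i : Fin n => toRF (p i j))) := by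
  rcases isEmpty_or_nonempty (Fin n) with hn | hn
  · refine ⟨isEmptyElim, isEmptyElim, isEmptyElim, isEmptyElim, by simp [Subsingleton.elim u v],
      isEmptyElim, fun _ _ _ => isEmptyElim, ∅, ?_, linearIndependent_empty_type⟩
    simpa [← hr] using mRank_le_card h (A := ∅) isEmptyElim
  · exact ⟨baseCode h, baseWord h,
      fun i j => occPoly (fun k => (baseWord h k).length) (baseCode h i) j,
      fun i => (mApply_baseWord_baseCode i).symm, by rw [mApply_baseCode, mApply_baseCode, hsol],
      baseWord_ne_nil, fun g _ hg i => wordPoly_mApply _ g hg _, baseIndices h,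
      hr ▸ mRank_le_card_baseIndices, linearIndependent_occPoly_baseCode⟩

/-- Every solution `h` of rank `r` of a word equation `u = v` factors as `h = θ ∘ f`, where
`f` is a solution of the equation, `θ` is nonerasing, the polynomials `p i j` express
`P((g ∘ f)(xᵢ))` linearly in the `P(g(xⱼ))` for every `g` of the same length type as `θ`,
and at least `r` of the column vectors of `(p i j)` are linearly independent over `ℚ(X)`. -/
theorem solution_factorization {n : ℕ}
    (A : Finset ℕ) (hA : ∀ a ∈ A, 0 < a)
    (u v : List (Fin n)) (h : Fin n → List ℕ) (hh : IntoAlph A h)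
    (hsol : mApply h u = mApply h v)
    (r : ℕ) (hr : mRank h = r) :
    ∃ (f : Fin n → List (Fin n)) (θ : Fin n → List ℕ)
      (p : Fin n → Fin n → Polynomial ℤ),
      (∀ i, h i = mApply θ (f i)) ∧
      mApply f u = mApply f v ∧
      (∀ i, θ i ≠ []) ∧
      (∀ g : Fin n → List ℕ, IntoAlph A g → (∀ j, (g j).length = (θ j).length) →
        ∀ i, wordPoly (mApply g (f i)) = ∑ j : Fin n, p i j * wordPoly (g j)) ∧
      (∃ s : Finset (Fin n), r ≤ s.card ∧
        LinearIndependent (RatFunc ℚ) (fun j : s => fun i : Fin n => toRF (p i j))) :=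
  solution_factorization_general A u v h hsol r hr
end
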